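/- If a^{opt} is a welfare-optimal profile of a coverage game and p is the perturbation that raises only resources {a_i^{opt} : i ∈ K} so that each becomes a maximum-value resource in the corresponding compromised agent's action set, then a^{opt} is a Nash equilibrium of the perturbed game G_p, so PoS(G_p) = 1. -/

import Mathlib

/-!
Marginal-contribution utilities make the welfare an exact potential: a unilateral deviation of
agent `i` does not change the welfare of the other agents, so it changes `U_i` exactly as it
changes the welfare. Hence a welfare-optimal profile leaves no normal agent a profitable deviation.
The perturbation only raises resources already covered by `a^{opt}`, so it adds the same amount
`∑ r, p r` to the welfare of `a^{opt}` and at most that much to any other profile: `a^{opt}` stays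
optimal in `G_p`, and the compromised agents pick maximum-value resources by construction.
-/

open Finset

variable {N R : Type} [Fintype N] [DecidableEq N] [Fintype R] [DecidableEq R]

/-- Welfare of the set of resources selected by agents in `J` under profile `a`. -/
def coveredValue (v : R → ℝ) (a : N → R) (J : Finset N) : ℝ :=
  ∑ r ∈ J.image a, v r

/-- Marginal-contribution utility: `U_i(a) = W(a) - W(∅, a_{-i})`. -/
def utility (v : R → ℝ) (a : N → R) (i : N) : ℝ :=
  coveredValue v a Finset.univ - coveredValue v a (Finset.univ.erase i)

/-- A joint action profile: each agent selects an admissible resource. -/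
def isProfile (A : N → Finset R) (a : N → R) : Prop :=
  ∀ i, a i ∈ A i

/-- Pure Nash equilibrium with compromised agent set `K`: normal agents have no
profitable unilateral deviation w.r.t. marginal-contribution utilities, and each
compromised agent selects a maximum-value resource of its action set. -/
def isNE (A : N → Finset R) (K : Finset N) (v : R → ℝ) (a : N → R) : Prop :=
  isProfile A a ∧
  (∀ i, i ∉ K → ∀ b ∈ A i, utility v (Function.update a i b) i ≤ utility v a i) ∧
  (∀ j ∈ K, ∀ r ∈ A j, v r ≤ v (a j))

/-- Optimal welfare of the game. -/
noncomputable def optWelfare (A : N → Finset R) (v : R → ℝ) : ℝ :=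
  sSup {w | ∃ a, isProfile A a ∧ w = coveredValue v a Finset.univ}

/-- Worst-case Nash equilibrium welfare. -/
noncomputable def worstNEWelfare (A : N → Finset R) (K : Finset N) (v : R → ℝ) : ℝ :=
  sInf {w | ∃ a, isNE A K v a ∧ w = coveredValue v a Finset.univ}

/-- Price of anarchy. -/
noncomputable def PoA (A : N → Finset R) (K : Finset N) (v : R → ℝ) : ℝ :=
  worstNEWelfare A K v / optWelfare A v

/-- `PoS(G) = 1`: some Nash equilibrium is welfare-optimal. -/
def PoSoneHolds (A : N → Finset R) (K : Finset N) (v : R → ℝ) : Prop :=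
  ∃ a, isNE A K v a ∧
    ∀ b, isProfile A b → coveredValue v b Finset.univ ≤ coveredValue v a Finset.univ

/-- Distance of the game: minimal ℓ1-norm of a nonnegative perturbation of the
resource values yielding a game with an optimal Nash equilibrium. -/
noncomputable def gameDist (A : N → Finset R) (K : Finset N) (v : R → ℝ) : ℝ :=
  sInf {c | ∃ p : R → ℝ, (∀ r, 0 ≤ p r) ∧
    PoSoneHolds A K (fun r => v r + p r) ∧ c = ∑ r, p r}

def IsWelfareOptimal (A : N → Finset R) (v : R → ℝ) (a : N → R) : Prop :=
  isProfile A a ∧ ∀ b, isProfile A b → coveredValue v b univ ≤ coveredValue v a univ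

omit [Fintype N] [Fintype R] [DecidableEq R] in
lemma isProfile_update {A : N → Finset R} {a : N → R} (ha : isProfile A a) {i : N} {b : R}
    (hb : b ∈ A i) : isProfile A (Function.update a i b) := by
  intro j
  rcases eq_or_ne j i with rfl | hj
  · simpa using hb
  · simpa [Function.update_of_ne hj] using ha j

omit [Fintype N] [Fintype R] in
lemma coveredValue_update_erase (v : R → ℝ) (a : N → R) (i : N) (b : R) (J : Finset N) :
    coveredValue v (Function.update a i b) (J.erase i) = coveredValue v a (J.erase i) := by
  unfold coveredValue
  congr 1
  exact image_congr fun j hj => Function.update_of_ne (ne_of_mem_erase hj) _ _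

omit [Fintype R] in
lemma utility_update_sub_utility (v : R → ℝ) (a : N → R) (i : N) (b : R) :
    utility v (Function.update a i b) i - utility v a i =
      coveredValue v (Function.update a i b) univ - coveredValue v a univ := by
  simp only [utility, coveredValue_update_erase]
  ring

omit [Fintype R] in
lemma IsWelfareOptimal.isNE {A : N → Finset R} {K : Finset N} {v : R → ℝ} {a : N → R}
    (ha : IsWelfareOptimal A v a) (hK : ∀ j ∈ K, ∀ r ∈ A j, v r ≤ v (a j)) : isNE A K v a := by
  refine ⟨ha.1, fun i _ b hb => ?_, hK⟩
  have hdev := utility_update_sub_utility v a i b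
  linarith [ha.2 _ (isProfile_update ha.1 hb)]

omit [Fintype N] [DecidableEq N] [Fintype R] in
lemma coveredValue_add (v p : R → ℝ) (a : N → R) (J : Finset N) :
    coveredValue (fun r => v r + p r) a J = coveredValue v a J + coveredValue p a J :=
  sum_add_distrib

omit [Fintype N] [DecidableEq N] in
lemma coveredValue_le_sum {p : R → ℝ} (hp : ∀ r, 0 ≤ p r) (a : N → R) (J : Finset N) :
    coveredValue p a J ≤ ∑ r, p r :=
  sum_le_univ_sum_of_nonneg hp

omit [DecidableEq N] in
lemma coveredValue_univ_eq_sum {p : R → ℝ} {a : N → R} (hsupp : ∀ r, p r ≠ 0 → ∃ i, a i = r) :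
    coveredValue p a univ = ∑ r, p r := by
  refine sum_subset (subset_univ _) fun r _ hr => ?_
  by_contra h
  obtain ⟨i, rfl⟩ := hsupp r h
  exact hr (mem_image_of_mem a (mem_univ i))

omit [DecidableEq N] in
lemma IsWelfareOptimal.add {A : N → Finset R} {v p : R → ℝ} {a : N → R}
    (ha : IsWelfareOptimal A v a) (hp : ∀ r, 0 ≤ p r) (hsupp : ∀ r, p r ≠ 0 → ∃ i, a i = r) :
    IsWelfareOptimal A (fun r => v r + p r) a := by
  refine ⟨ha.1, fun b hb => ?_⟩
  rw [coveredValue_add, coveredValue_add, coveredValue_univ_eq_sum hsupp]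
  exact add_le_add (ha.2 b hb) (coveredValue_le_sum hp b univ)

theorem perturbed_opt_is_nash_general (A : N → Finset R) (K : Finset N) (v : R → ℝ)
    (aopt : N → R) (hprof : isProfile A aopt)
    (hopt : ∀ b, isProfile A b →
      coveredValue v b Finset.univ ≤ coveredValue v aopt Finset.univ)
    (p : R → ℝ) (hp0 : ∀ r, 0 ≤ p r)
    (hsupp : ∀ r, p r ≠ 0 → ∃ i ∈ K, aopt i = r)
    (hargmax : ∀ j ∈ K, ∀ r ∈ A j, v r + p r ≤ v (aopt j) + p (aopt j)) :
    isNE A K (fun r => v r + p r) aopt ∧ PoSoneHolds A K (fun r => v r + p r) := by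
  have hoptp : IsWelfareOptimal A (fun r => v r + p r) aopt :=
    IsWelfareOptimal.add ⟨hprof, hopt⟩ hp0 fun r hr =>
      (hsupp r hr).imp fun _ hi => hi.2
  have hNE := hoptp.isNE hargmax
  exact ⟨hNE, aopt, hNE, hoptp.2⟩

/-- If `p` raises only the resources used by compromised agents in an optimal
profile `a^{opt}`, making each a maximum-value resource of the corresponding
action set, then `a^{opt}` is a Nash equilibrium of `G_p`, so `PoS(G_p) = 1`. -/
theorem perturbed_opt_is_nash (A : N → Finset R) (K : Finset N) (v : R → ℝ)
    (hv0 : ∀ r, 0 ≤ v r)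
    (aopt : N → R) (hprof : isProfile A aopt)
    (hopt : ∀ b, isProfile A b →
      coveredValue v b Finset.univ ≤ coveredValue v aopt Finset.univ)
    (p : R → ℝ) (hp0 : ∀ r, 0 ≤ p r)
    (hsupp : ∀ r, p r ≠ 0 → ∃ i ∈ K, aopt i = r)
    (hargmax : ∀ j ∈ K, ∀ r ∈ A j, v r + p r ≤ v (aopt j) + p (aopt j)) :
    isNE A K (fun r => v r + p r) aopt ∧ PoSoneHolds A K (fun r => v r + p r) :=
  perturbed_opt_is_nash_general A K v aopt hprof hopt p hp0 hsupp hargmax
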